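/- arXiv:1504.00169 — 2 statements merged into one kernel-verified Lean document; each statement's English description precedes it below -/
import Mathlib

section
/- Let A be a finite set with |A| = q ≥ 2 and let n ≥ 2. Every complete n-universal transformation f : A^m → A^m has size m ≥ 2n. -/
/-!
Simulate the constant map followed by the identity. After the first step the first `n`
coordinates hold a constant, yet the second step must restore the input there, so the input
is stored injectively in the remaining `m - n` coordinates: `q ^ n ≤ q ^ (m - n)`.
-/

/-- The instruction of `A^m` induced by the `i`-th coordinate function of `f`. -/
def instr {A : Type*} {m : ℕ} (f : (Fin m → A) → Fin m → A) (i : Fin m) :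
    (Fin m → A) → Fin m → A :=
  fun x => Function.update x i (f x i)

/-- Apply a list of induced instructions of `f`, first element of the list first. -/
def applyInstrs {A : Type*} {m : ℕ} (f : (Fin m → A) → Fin m → A) :
    List (Fin m) → (Fin m → A) → Fin m → A
  | [], x => x
  | i :: l, x => applyInstrs f l (instr f i x)

/-- Projection of `A^m` onto the first `n` coordinates. -/
def pr {A : Type*} {m n : ℕ} (hmn : n ≤ m) (x : Fin m → A) : Fin n → A :=
  fun i => x (Fin.castLE hmn i)

/-- `hs` witnesses that `f` sequentially simulates the sequence `gs`: the `k`-th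
element of `hs` is a nonempty list of instruction indices expressing `h^(k) ∈ S_f`,
and for each `i` the composition `h^(1) ∘ ⋯ ∘ h^(i)` simulates `g^(i)`. -/
def SeqWitness {A : Type*} {m n : ℕ} (hmn : n ≤ m)
    (f : (Fin m → A) → Fin m → A)
    (gs : List ((Fin n → A) → Fin n → A))
    (hs : List (List (Fin m))) : Prop :=
  hs.length = gs.length ∧ (∀ l ∈ hs, l ≠ []) ∧
    ∀ (i : ℕ) (hi : i < gs.length) (x : Fin m → A),
      gs.get ⟨i, hi⟩ (pr hmn x) = pr hmn (applyInstrs f ((hs.take (i + 1)).flatten) x)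

theorem applyInstrs_append {A : Type*} {m : ℕ} (f : (Fin m → A) → Fin m → A)
    (l₁ l₂ : List (Fin m)) (x : Fin m → A) :
    applyInstrs f (l₁ ++ l₂) x = applyInstrs f l₂ (applyInstrs f l₁ x) := by
  induction l₁ generalizing x with
  | nil => rfl
  | cons i l ih => simp [applyInstrs, ih]

theorem SeqWitness.exists_pair {A : Type*} {m n : ℕ} {hmn : n ≤ m}
    {f : (Fin m → A) → Fin m → A} {g₁ g₂ : (Fin n → A) → Fin n → A}
    {hs : List (List (Fin m))} (hw : SeqWitness hmn f [g₁, g₂] hs) :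
    ∃ l₁ l₂ : List (Fin m), (∀ x, g₁ (pr hmn x) = pr hmn (applyInstrs f l₁ x)) ∧
      ∀ x, g₂ (pr hmn x) = pr hmn (applyInstrs f l₂ (applyInstrs f l₁ x)) := by
  obtain ⟨hlen, -, hsim⟩ := hw
  obtain ⟨l₁, l₂, rfl⟩ := List.length_eq_two.mp hlen
  refine ⟨l₁, l₂, fun x => ?_, fun x => ?_⟩
  · simpa using hsim 0 (by simp) x
  · simpa [applyInstrs_append] using hsim 1 (by simp) x

section Projection

variable {A : Type*} {m n : ℕ} (hmn : n ≤ m)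

def prTail (x : Fin m → A) : Fin (m - n) → A :=
  fun j => x ⟨n + j, by omega⟩

theorem pr_surjective [Nonempty A] : Function.Surjective (pr (A := A) hmn) := by
  classical
  intro v
  refine ⟨fun i => if h : (i : ℕ) < n then v ⟨i, h⟩ else Classical.arbitrary A, ?_⟩
  funext i
  simp [pr]

theorem eq_of_pr_eq_of_prTail_eq {x y : Fin m → A} (hpr : pr hmn x = pr hmn y)
    (htail : prTail hmn x = prTail hmn y) : x = y := by
  funext i
  by_cases hi : (i : ℕ) < n
  · simpa [pr] using congrFun hpr ⟨i, hi⟩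
  · have := congrFun htail ⟨i - n, by omega⟩
    simp only [prTail] at this
    convert this using 2 <;> ext <;> simp <;> omega

theorem two_mul_le_of_pr_comp_const [Fintype A] (hA : 1 < Fintype.card A)
    (φ : (Fin m → A) → Fin m → A) (c : Fin n → A) (hc : ∀ x, pr hmn (φ x) = c)
    (hφ : ∀ x y, φ x = φ y → pr hmn x = pr hmn y) : 2 * n ≤ m := by
  have : Nonempty A := Fintype.card_pos_iff.mp (by omega)
  set s := Function.surjInv (pr_surjective (A := A) hmn)
  have hs : Function.Injective (fun v => prTail hmn (φ (s v))) := by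
    intro v w hvw
    have hφvw : φ (s v) = φ (s w) :=
      eq_of_pr_eq_of_prTail_eq hmn ((hc _).trans (hc _).symm) hvw
    simpa only [s, Function.surjInv_eq] using hφ _ _ hφvw
  have hcard := Fintype.card_le_of_injective _ hs
  simp only [Fintype.card_fun, Fintype.card_fin] at hcard
  have := (Nat.pow_le_pow_iff_right hA).mp hcard
  omega

end Projection

theorem complete_universal_size_ge_general (q n m : ℕ) (hq : 2 ≤ q) (hmn : n ≤ m)
    (A : Type*) [Fintype A] (hA : Fintype.card A = q)
    (f : (Fin m → A) → Fin m → A)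
    (hf : ∀ gs : List ((Fin n → A) → Fin n → A), ∃ hs, SeqWitness hmn f gs hs) :
    2 * n ≤ m := by
  obtain ⟨a⟩ : Nonempty A := Fintype.card_pos_iff.mp (by omega)
  obtain ⟨hs, hw⟩ := hf [fun _ _ => a, id]
  obtain ⟨l₁, l₂, hconst, hid⟩ := hw.exists_pair
  refine two_mul_le_of_pr_comp_const hmn (by omega) (applyInstrs f l₁) (fun _ => a)
    (fun x => (hconst x).symm) fun x y hxy => ?_
  exact (hid x).trans (hxy ▸ (hid y).symm)

/-- Every complete `n`-universal transformation of `A^m` has size `m ≥ 2n`. -/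
theorem complete_universal_size_ge (q n m : ℕ) (hq : 2 ≤ q) (hn : 2 ≤ n) (hmn : n ≤ m)
    (A : Type*) [Fintype A] (hA : Fintype.card A = q)
    (f : (Fin m → A) → Fin m → A)
    (hf : ∀ gs : List ((Fin n → A) → Fin n → A), ∃ hs, SeqWitness hmn f gs hs) :
    2 * n ≤ m :=
  complete_universal_size_ge_general q n m hq hmn A hA f hf
end

section
/- Fix q ≥ 2 and a finite set A with |A| = q. For every ε > 0 there exists N such that for every n ≥ N there exist m ≥ n and a complete n-universal transformation f : A^m → A^m whose maximal sequential time satisfies st^max_f ≤ (n + 1 + ε)·q^{n·q^n}. -/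
/-!
Take registers `x` (the `n` output coordinates), `y` (a copy of the input), `d = n·q^n` offset
registers `z` and a counter `c w` for every `w ∈ (ZMod q)^d`, and fix a bijection `ι` between the
transformations of `A^n` and `(ZMod q)^d`. The machine keeps the code of the transformation to be
applied redundantly as `z + ∑ w, c w • w`: updating `x i` applies the transformation with that code
to `y`, updating `z r` sets the code to `0`, and updating `c w` adds `w` to the code. After `y := x`
and a reset (`d + n` instructions), passing from one transformation `h` to the next one `g` costs
the single counter step `c (ι g - ι h)` and the `n` updates of `x`. A sequence of length
`L = q^d` thus takes `d + n + L·(n + 1)` instructions, and `d + n ≤ ε·L` as soon as `n ≥ 1/ε`.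
-/

open Function

section Registers

variable {J M A : Type*}

def ReadsOnlyOutside (F : (J → A) → J → A) (l : List J) : Prop :=
  ∀ i ∈ l, ∀ s t : J → A, (∀ j ∉ l, s j = t j) → F s i = F t i

theorem ReadsOnlyOutside.of_cons {F : (J → A) → J → A} {a : J} {l : List J}
    (h : ReadsOnlyOutside F (a :: l)) : ReadsOnlyOutside F l :=
  fun i hi s t hst => h i (List.mem_cons_of_mem a hi) s t
    fun j hj => hst j fun hjl => hj (List.mem_cons_of_mem a hjl)

variable [DecidableEq J]

def runInstrs (F : (J → A) → J → A) : List J → (J → A) → J → A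
  | [], s => s
  | i :: l, s => runInstrs F l (update s i (F s i))

theorem applyInstrs_eq_runInstrs {m : ℕ} (f : (Fin m → A) → Fin m → A) :
    applyInstrs f = runInstrs f := by
  funext l x
  induction l generalizing x with
  | nil => rfl
  | cons i l ih => exact ih _

theorem runInstrs_append (F : (J → A) → J → A) (l₁ l₂ : List J) (s : J → A) :
    runInstrs F (l₁ ++ l₂) s = runInstrs F l₂ (runInstrs F l₁ s) := by
  induction l₁ generalizing s with
  | nil => rfl
  | cons i l ih => exact ih _

theorem runInstrs_apply_of_readsOnlyOutside {F : (J → A) → J → A} {l : List J}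
    (hF : ReadsOnlyOutside F l) (s : J → A) (j : J) :
    runInstrs F l s j = if j ∈ l then F s j else s j := by
  induction l generalizing s with
  | nil => simp [runInstrs]
  | cons a l ih =>
    rw [runInstrs, ih hF.of_cons]
    by_cases hjl : j ∈ l
    · rw [if_pos hjl, if_pos (List.mem_cons_of_mem a hjl)]
      refine hF j (List.mem_cons_of_mem a hjl) _ _ fun k hk => update_of_ne ?_ _ _
      rintro rfl
      exact hk List.mem_cons_self
    · by_cases hja : j = a
      · subst hja; simp [hjl]
      · simp [hjl, hja]

def relabel (τ : J ≃ M) (F : (J → A) → J → A) : (M → A) → M → A :=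
  fun x k => F (x ∘ τ) (τ.symm k)

theorem runInstrs_relabel [DecidableEq M] (τ : J ≃ M) (F : (J → A) → J → A) (l : List J)
    (x : M → A) : runInstrs (relabel τ F) (l.map τ) x ∘ τ = runInstrs F l (x ∘ τ) := by
  induction l generalizing x with
  | nil => rfl
  | cons i l ih =>
    rw [List.map_cons, runInstrs, runInstrs, ih, update_comp_equiv]
    simp only [relabel, Equiv.symm_apply_apply]

end Registers

section Simulation

variable {J M A : Type*} [DecidableEq J] {n : ℕ}

/-- `SeqWitness` for registers indexed by an arbitrary type, simulating on the registers `out`. -/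
def Simulates (F : (J → A) → J → A) (out : Fin n → J) (gs : List ((Fin n → A) → Fin n → A))
    (P : List (List J)) : Prop :=
  P.length = gs.length ∧ (∀ l ∈ P, l ≠ []) ∧
    ∀ (i : ℕ) (hi : i < gs.length) (s : J → A),
      gs.get ⟨i, hi⟩ (s ∘ out) = runInstrs F (P.take (i + 1)).flatten s ∘ out

theorem Simulates.relabel [DecidableEq M] {F : (J → A) → J → A} {out : Fin n → J}
    {gs : List ((Fin n → A) → Fin n → A)} {P : List (List J)} (h : Simulates F out gs P)
    (τ : J ≃ M) : Simulates (relabel τ F) (τ ∘ out) gs (P.map (List.map τ)) := by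
  obtain ⟨hlen, hne, hsim⟩ := h
  refine ⟨by rw [List.length_map, hlen], ?_, fun i hi x => ?_⟩
  · simpa using hne
  · rw [← List.map_take, ← List.map_flatten]
    exact (hsim i hi (x ∘ τ)).trans (by rw [← runInstrs_relabel τ F]; rfl)

theorem Simulates.seqWitness {m : ℕ} (hmn : n ≤ m) {f : (Fin m → A) → Fin m → A}
    {gs : List ((Fin n → A) → Fin n → A)} {hs : List (List (Fin m))}
    (h : Simulates f (Fin.castLE hmn) gs hs) : SeqWitness hmn f gs hs := by
  rw [SeqWitness, applyInstrs_eq_runInstrs]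
  exact h

end Simulation

namespace UniversalMachine

abbrev Reg (n d : ℕ) (R : Type*) := Fin n ⊕ Fin n ⊕ Fin d ⊕ (Fin d → R)

variable {A R : Type*} [Ring R] {n d : ℕ}

def Reg.x (i : Fin n) : Reg n d R := .inl i
def Reg.y (i : Fin n) : Reg n d R := .inr (.inl i)
def Reg.z (r : Fin d) : Reg n d R := .inr (.inr (.inl r))
def Reg.c (w : Fin d → R) : Reg n d R := .inr (.inr (.inr w))

variable (e : A ≃ R) (ι : ((Fin n → A) → Fin n → A) ≃ (Fin d → R))

def loadProgram : List (Reg n d R) := (List.finRange d).map Reg.z ++ (List.finRange n).map Reg.y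

def stepProgram (v : Fin d → R) (g : (Fin n → A) → Fin n → A) : List (Reg n d R) :=
  Reg.c (ι g - v) :: (List.finRange n).map Reg.x

def stepPrograms : (Fin d → R) → List ((Fin n → A) → Fin n → A) → List (List (Reg n d R))
  | _, [] => []
  | v, g :: gs => stepProgram ι v g :: stepPrograms (ι g) gs

def simProgram : List ((Fin n → A) → Fin n → A) → List (List (Reg n d R))
  | [] => []
  | g :: gs => (loadProgram ++ stepProgram ι 0 g) :: stepPrograms ι (ι g) gs

theorem length_stepPrograms (v : Fin d → R) (gs : List ((Fin n → A) → Fin n → A)) :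
    (stepPrograms ι v gs).length = gs.length := by
  induction gs generalizing v with
  | nil => rfl
  | cons g gs ih => simp [stepPrograms, ih]

theorem length_flatten_stepPrograms (v : Fin d → R) (gs : List ((Fin n → A) → Fin n → A)) :
    (stepPrograms ι v gs).flatten.length = gs.length * (n + 1) := by
  induction gs generalizing v with
  | nil => simp [stepPrograms]
  | cons g gs ih =>
    simp only [stepPrograms, List.flatten_cons, List.length_append, ih, stepProgram,
      List.length_cons, List.length_map, List.length_finRange]
    ring

theorem length_flatten_simProgram_le (gs : List ((Fin n → A) → Fin n → A)) :
    (simProgram ι gs).flatten.length ≤ d + n + gs.length * (n + 1) := by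
  cases gs with
  | nil => simp [simProgram]
  | cons g gs =>
    simp only [simProgram, List.flatten_cons, List.length_append, length_flatten_stepPrograms,
      loadProgram, stepProgram, List.length_cons, List.length_map, List.length_finRange]
    exact (by ring : _ = _).le

theorem ne_nil_of_mem_stepPrograms {v : Fin d → R} {gs : List ((Fin n → A) → Fin n → A)}
    {l : List (Reg n d R)} (hl : l ∈ stepPrograms ι v gs) : l ≠ [] := by
  induction gs generalizing v with
  | nil => simp [stepPrograms] at hl
  | cons g gs ih =>
    rcases List.mem_cons.1 hl with rfl | hl
    · simp [stepProgram]
    · exact ih hl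

variable [Fintype R]

def counterSum (s : Reg n d R → A) : Fin d → R := ∑ w, e (s (Reg.c w)) • w

def code (s : Reg n d R → A) : Fin d → R := (fun r => e (s (Reg.z r))) + counterSum e s

def machine (s : Reg n d R → A) : Reg n d R → A
  | .inl i => ι.symm (code e s) (s ∘ Reg.y) i
  | .inr (.inl i) => s (Reg.x i)
  | .inr (.inr (.inl r)) => e.symm (-counterSum e s r)
  | .inr (.inr (.inr w)) => e.symm (e (s (Reg.c w)) + 1)

variable {e}

theorem counterSum_congr {s t : Reg n d R → A} (h : ∀ w, s (Reg.c w) = t (Reg.c w)) :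
    counterSum e s = counterSum e t := by
  simp only [counterSum, h]

theorem code_congr {s t : Reg n d R → A} (hz : ∀ r, s (Reg.z r) = t (Reg.z r))
    (hc : ∀ w, s (Reg.c w) = t (Reg.c w)) : code e s = code e t := by
  simp only [code, hz, counterSum_congr hc]

theorem readsOnlyOutside_x : ReadsOnlyOutside (machine e ι) ((List.finRange n).map Reg.x) := by
  rintro _ hi s t hst
  obtain ⟨i, -, rfl⟩ := List.mem_map.1 hi
  have hy : s ∘ Reg.y = t ∘ Reg.y := funext fun k => hst _ (by simp [Reg.x, Reg.y])
  have hcode : code e s = code e t :=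
    code_congr (fun r => hst _ (by simp [Reg.x, Reg.z])) (fun w => hst _ (by simp [Reg.x, Reg.c]))
  simp only [machine, Reg.x, hy, hcode]

theorem readsOnlyOutside_y : ReadsOnlyOutside (machine e ι) ((List.finRange n).map Reg.y) := by
  rintro _ hi s t hst
  obtain ⟨i, -, rfl⟩ := List.mem_map.1 hi
  exact hst _ (by simp [Reg.x, Reg.y])

theorem readsOnlyOutside_z : ReadsOnlyOutside (machine e ι) ((List.finRange d).map Reg.z) := by
  rintro _ hr s t hst
  obtain ⟨r, -, rfl⟩ := List.mem_map.1 hr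
  simp only [machine, Reg.z, counterSum_congr fun w => hst _ (by simp [Reg.z, Reg.c])]

variable [DecidableEq R]

theorem code_update_c (s : Reg n d R → A) (w : Fin d → R) :
    code e (update s (Reg.c w) (machine e ι s (Reg.c w))) = code e s + w := by
  have hc : ∀ u, e (update s (Reg.c w) (machine e ι s (Reg.c w)) (Reg.c u))
      = e (s (Reg.c u)) + if u = w then 1 else 0 := by
    intro u
    by_cases hu : u = w
    · subst hu; simp [machine, Reg.c]
    · simp [Reg.c, hu]
  simp only [code, counterSum, hc, add_smul, ite_smul, one_smul, zero_smul,
    Finset.sum_add_distrib, Finset.sum_ite_eq', Finset.mem_univ, if_true]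
  have hz : ∀ r, update s (Reg.c w) (machine e ι s (Reg.c w)) (Reg.z r) = s (Reg.z r) := by
    intro r; simp [Reg.c, Reg.z]
  simp only [hz]
  abel

variable (e) in
theorem runInstrs_loadProgram (s : Reg n d R → A) :
    runInstrs (machine e ι) loadProgram s ∘ Reg.y = s ∘ Reg.x ∧
      code e (runInstrs (machine e ι) loadProgram s) = 0 := by
  rw [loadProgram, runInstrs_append]
  set s₁ := runInstrs (machine e ι) ((List.finRange d).map Reg.z) s
  have h₁ := runInstrs_apply_of_readsOnlyOutside (readsOnlyOutside_z (e := e) ι) s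
  have h₂ := runInstrs_apply_of_readsOnlyOutside (readsOnlyOutside_y (e := e) ι) s₁
  constructor
  · funext i
    simp [h₂, h₁, s₁, machine, Reg.x, Reg.y, Reg.z]
  · have hcs : counterSum e s₁ = counterSum e s :=
      counterSum_congr fun w => by simp [s₁, h₁, Reg.z, Reg.c]
    rw [code_congr (t := s₁) (fun r => by simp [h₂, Reg.y, Reg.z])
      (fun w => by simp [h₂, Reg.y, Reg.c])]
    funext r
    simp [code, hcs, s₁, h₁, machine, Reg.z]

theorem runInstrs_stepProgram {s : Reg n d R → A} {v : Fin d → R} (hv : code e s = v)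
    (g : (Fin n → A) → Fin n → A) :
    runInstrs (machine e ι) (stepProgram ι v g) s ∘ Reg.x = g (s ∘ Reg.y) ∧
      runInstrs (machine e ι) (stepProgram ι v g) s ∘ Reg.y = s ∘ Reg.y ∧
      code e (runInstrs (machine e ι) (stepProgram ι v g) s) = ι g := by
  simp only [stepProgram, runInstrs]
  set s₁ := update s (Reg.c (ι g - v)) (machine e ι s (Reg.c (ι g - v)))
  have hcode₁ : code e s₁ = ι g := by rw [code_update_c, hv, add_sub_cancel]
  have hy₁ : s₁ ∘ Reg.y = s ∘ Reg.y := funext fun i => by simp [s₁, Reg.c, Reg.y]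
  have h₂ := runInstrs_apply_of_readsOnlyOutside (readsOnlyOutside_x (e := e) ι) s₁
  refine ⟨funext fun i => ?_, ?_, ?_⟩
  · simp [h₂, machine, Reg.x, hy₁, hcode₁]
  · rw [← hy₁]
    funext i
    simp [h₂, Reg.x, Reg.y]
  · rw [← hcode₁]
    exact code_congr (fun r => by simp [h₂, Reg.x, Reg.z]) (fun w => by simp [h₂, Reg.x, Reg.c])

theorem runInstrs_stepPrograms {s : Reg n d R → A} {v : Fin d → R} (hv : code e s = v)
    (gs : List ((Fin n → A) → Fin n → A)) (i : ℕ) (hi : i < gs.length) :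
    gs.get ⟨i, hi⟩ (s ∘ Reg.y) =
      runInstrs (machine e ι) ((stepPrograms ι v gs).take (i + 1)).flatten s ∘ Reg.x := by
  induction gs generalizing s v i with
  | nil => simp at hi
  | cons g gs ih =>
    obtain ⟨hx, hy, hcode⟩ := runInstrs_stepProgram ι hv g
    cases i with
    | zero =>
      simp only [stepPrograms, List.take_succ_cons, List.take_zero, List.flatten_cons,
        List.flatten_nil, List.append_nil]
      exact hx.symm
    | succ i =>
      rw [stepPrograms, List.take_succ_cons, List.flatten_cons, runInstrs_append, ← ih hcode,
        hy]
      rfl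

variable (e) in
theorem simulates_simProgram (gs : List ((Fin n → A) → Fin n → A)) :
    Simulates (machine e ι) Reg.x gs (simProgram ι gs) := by
  cases gs with
  | nil => simp [Simulates, simProgram]
  | cons g gs =>
    refine ⟨by simp [simProgram, length_stepPrograms], fun l hl => ?_, fun i hi s => ?_⟩
    · rcases List.mem_cons.1 hl with rfl | hl
      · simp [stepProgram]
      · exact ne_nil_of_mem_stepPrograms ι hl
    · obtain ⟨hy, hcode⟩ := runInstrs_loadProgram e ι s
      have hflat : ((simProgram ι (g :: gs)).take (i + 1)).flatten
          = loadProgram ++ ((stepPrograms ι 0 (g :: gs)).take (i + 1)).flatten := by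
        simp [simProgram, stepPrograms]
      rw [hflat, runInstrs_append, ← runInstrs_stepPrograms ι hcode, hy]

theorem exists_seqWitness_length_flatten_le (e : A ≃ R)
    (ι : ((Fin n → A) → Fin n → A) ≃ (Fin d → R)) :
    ∃ (m : ℕ) (hmn : n ≤ m) (f : (Fin m → A) → Fin m → A),
      ∀ gs : List ((Fin n → A) → Fin n → A), ∃ hs,
        SeqWitness hmn f gs hs ∧ hs.flatten.length ≤ d + n + gs.length * (n + 1) := by
  -- `τ` puts the registers `x` on the first `n` coordinates, the ones read by `pr`.
  let τ : Reg n d R ≃ Fin (n + Fintype.card (Fin n ⊕ Fin d ⊕ (Fin d → R))) :=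
    (Equiv.sumCongr (Equiv.refl _) (Fintype.equivFin _)).trans finSumFinEquiv
  refine ⟨_, Nat.le_add_right n _, relabel τ (machine e ι),
    fun gs => ⟨(simProgram ι gs).map (List.map τ), ?_, ?_⟩⟩
  · exact ((simulates_simProgram e ι gs).relabel τ).seqWitness _
  · rw [← List.map_flatten, List.length_map]
    exact length_flatten_simProgram_le ι gs

end UniversalMachine

theorem List.Nodup.length_eq_card {α : Type*} [Fintype α] {l : List α} (hl : l.Nodup)
    (h : ∀ a, a ∈ l) : l.length = Fintype.card α :=
  (Fintype.card_fin _).symm.trans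
    (Fintype.card_of_bijective ⟨List.nodup_iff_injective_get.1 hl, List.get_surjective_iff.2 h⟩)

theorem mul_mul_pow_add_le_pow {q n : ℕ} (hq : 2 ≤ q) (hn : 2 ≤ n) :
    n * (n * q ^ n + n) ≤ q ^ (n * q ^ n) := by
  have hnQ : n ≤ q ^ n := Nat.lt_two_pow_self.le.trans (Nat.pow_le_pow_left hq n)
  have hQ : 4 ≤ q ^ n :=
    calc 4 = 2 ^ 2 := by norm_num
      _ ≤ 2 ^ n := Nat.pow_le_pow_right (by norm_num) hn
      _ ≤ q ^ n := Nat.pow_le_pow_left hq n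
  calc n * (n * q ^ n + n) = n * n * (q ^ n + 1) := by ring
    _ ≤ q ^ n * q ^ n * (q ^ n * q ^ n) := Nat.mul_le_mul (Nat.mul_le_mul hnQ hnQ) (by nlinarith)
    _ = (q ^ n) ^ 4 := by ring
    _ ≤ (q ^ n) ^ q ^ n := Nat.pow_le_pow_right (by omega) hQ
    _ = q ^ (n * q ^ n) := (pow_mul q n _).symm

theorem natCast_mul_pow_add_le {q n : ℕ} (hq : 2 ≤ q) (hn : 2 ≤ n) {ε : ℝ} (hε : 0 < ε)
    (hεn : 1 ≤ ε * n) : ((n * q ^ n + n : ℕ) : ℝ) ≤ ε * (q : ℝ) ^ (n * q ^ n) :=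
  calc ((n * q ^ n + n : ℕ) : ℝ) ≤ ε * n * (n * q ^ n + n : ℕ) := by nlinarith
    _ ≤ ε * (q : ℝ) ^ (n * q ^ n) := by
      rw [mul_assoc]
      gcongr
      exact_mod_cast mul_mul_pow_add_le_pow hq hn

/-- Fix `q ≥ 2` and `A` with `|A| = q`. For every `ε > 0` there is `N` such that for
all `n ≥ N` there is a complete `n`-universal transformation `f` of some `A^m` (`m ≥ n`)
whose maximal sequential time is at most `(n + 1 + ε)·q^(n·q^n)`. -/
theorem complete_universal_max_seq_time_upper (q : ℕ) (hq : 2 ≤ q)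
    (A : Type*) [Fintype A] (hA : Fintype.card A = q) (ε : ℝ) (hε : 0 < ε) :
    ∃ N : ℕ, ∀ n : ℕ, N ≤ n →
      ∃ (m : ℕ) (hmn : n ≤ m) (f : (Fin m → A) → Fin m → A),
        -- f is complete n-universal
        (∀ gs : List ((Fin n → A) → Fin n → A), ∃ hs, SeqWitness hmn f gs hs) ∧
        -- every sequence listing all transformations of A^n exactly once can be
        -- simulated using at most (n + 1 + ε)·q^(n·q^n) instructions
        (∀ gs : List ((Fin n → A) → Fin n → A), gs.Nodup → (∀ g, g ∈ gs) →
          ∃ hs, SeqWitness hmn f gs hs ∧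
            (hs.flatten.length : ℝ) ≤ ((n : ℝ) + 1 + ε) * (q : ℝ) ^ (n * q ^ n)) := by
  classical
  have : NeZero q := ⟨by omega⟩
  refine ⟨max 2 ⌈1 / ε⌉₊, fun n hn => ?_⟩
  have hcard : Fintype.card ((Fin n → A) → Fin n → A) = q ^ (n * q ^ n) := by
    simp [hA, ← pow_mul]
  obtain ⟨m, hmn, f, hf⟩ := UniversalMachine.exists_seqWitness_length_flatten_le
    (Fintype.equivOfCardEq (by simp [hA]) : A ≃ ZMod q)
    (Fintype.equivOfCardEq (by rw [hcard]; simp) : _ ≃ (Fin (n * q ^ n) → ZMod q))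
  refine ⟨m, hmn, f, fun gs => (hf gs).imp fun _ h => h.1, fun gs hnd hall => ?_⟩
  obtain ⟨hs, hw, hlen⟩ := hf gs
  rw [hnd.length_eq_card hall, hcard] at hlen
  have hεn : 1 ≤ ε * n := (div_le_iff₀' hε).1 (Nat.ceil_le.1 (le_of_max_le_right hn))
  have hover := natCast_mul_pow_add_le hq (le_of_max_le_left hn) hε hεn
  refine ⟨hs, hw, ?_⟩
  calc (hs.flatten.length : ℝ) ≤ ((n * q ^ n + n : ℕ) : ℝ) + q ^ (n * q ^ n) * (n + 1) := by
        exact_mod_cast hlen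
    _ ≤ ((n : ℝ) + 1 + ε) * (q : ℝ) ^ (n * q ^ n) := by linarith
end
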